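/- For every p ∈ (0,1), the identity K(p) + (1 - p²)·Π(p²(2 - p²), p) = (2 - p²) · ∫₀^{π/2} sqrt(1 - p² sin²θ) / (1 - p²(2 - p²) sin²θ) dθ holds. -/

import Mathlib

/-!
The identity holds already at the level of integrands. With `α² = p²(2 - p²)`, so that
`1 - α² = (1 - p²)²`, one has `(1 - α² sin²θ) + (1 - p²) = (2 - p²)(1 - p² sin²θ)`; dividing by
`(1 - α² sin²θ) √(1 - p² sin²θ)` turns the sum of the integrands of `K` and `(1 - p²) Π` into
the integrand on the right. Both denominators are positive, so everything is continuous and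
linearity of the integral finishes the proof.
-/

open Real intervalIntegral

lemma one_sub_mul_sin_sq_pos {k : ℝ} (hk : k < 1) (θ : ℝ) : 0 < 1 - k * sin θ ^ 2 := by
  nlinarith [sin_sq_le_one θ, mul_nonneg (sq_nonneg (sin θ)) (sub_nonneg.2 hk.le)]

lemma mul_two_sub_lt_one {q : ℝ} (hq : q ≠ 1) : q * (2 - q) < 1 := by
  nlinarith [sq_pos_of_ne_zero (sub_ne_zero.2 hq)]

lemma one_div_sqrt_add_mul_one_div_mul_sqrt {q x : ℝ} (hx : 0 < 1 - q * x)
    (hE : 1 - q * (2 - q) * x ≠ 0) :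
    1 / √(1 - q * x) + (1 - q) * (1 / ((1 - q * (2 - q) * x) * √(1 - q * x)))
      = (2 - q) * (√(1 - q * x) / (1 - q * (2 - q) * x)) := by
  have hd : √(1 - q * x) ≠ 0 := (sqrt_pos.2 hx).ne'
  have key : (1 - q * (2 - q) * x) + (1 - q) = (2 - q) * √(1 - q * x) ^ 2 := by
    rw [sq_sqrt hx.le]; ring
  generalize 1 - q * (2 - q) * x = E at hE key ⊢
  field_simp
  linear_combination key

/-- For every `p ∈ (0,1)`,
`K(p) + (1-p²) Π(p²(2-p²), p) = (2-p²) ∫₀^{π/2} sqrt(1-p² sin²θ)/(1-p²(2-p²) sin²θ) dθ`. -/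
theorem elliptic_first_third_identity (p : ℝ) (hp : p ∈ Set.Ioo (0:ℝ) 1) :
    (∫ θ in (0:ℝ)..(Real.pi / 2), 1 / Real.sqrt (1 - p ^ 2 * Real.sin θ ^ 2))
      + (1 - p ^ 2) *
        (∫ θ in (0:ℝ)..(Real.pi / 2),
          1 / ((1 - p ^ 2 * (2 - p ^ 2) * Real.sin θ ^ 2) *
            Real.sqrt (1 - p ^ 2 * Real.sin θ ^ 2)))
      = (2 - p ^ 2) *
        ∫ θ in (0:ℝ)..(Real.pi / 2),
          Real.sqrt (1 - p ^ 2 * Real.sin θ ^ 2) /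
            (1 - p ^ 2 * (2 - p ^ 2) * Real.sin θ ^ 2) := by
  have hq : p ^ 2 < 1 := pow_lt_one₀ hp.1.le hp.2 two_ne_zero
  have hD := one_sub_mul_sin_sq_pos hq
  have hE := one_sub_mul_sin_sq_pos (mul_two_sub_lt_one hq.ne)
  have hK : Continuous fun θ => 1 / √(1 - p ^ 2 * sin θ ^ 2) := by
    fun_prop (disch := exact fun θ => (sqrt_pos.2 (hD θ)).ne')
  have hPi : Continuous fun θ => (1 - p ^ 2) *
      (1 / ((1 - p ^ 2 * (2 - p ^ 2) * sin θ ^ 2) * √(1 - p ^ 2 * sin θ ^ 2))) := by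
    fun_prop (disch := exact fun θ => (mul_pos (hE θ) (sqrt_pos.2 (hD θ))).ne')
  rw [← integral_const_mul, ← integral_const_mul,
    ← integral_add (hK.intervalIntegrable _ _) (hPi.intervalIntegrable _ _)]
  exact integral_congr fun θ _ => one_div_sqrt_add_mul_one_div_mul_sqrt (hD θ) (hE θ).ne'
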